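/- arXiv:1902.05916 — 2 statements merged into one kernel-verified Lean document; each statement's English description precedes it below -/
import Mathlib

section
/- Let $(w_n)_{n\ge1}$ be a strictly increasing sequence in $(0,1)$ with $w_n\to1$, and let $(\rho_n)_{n\ge1}$ be a sequence of positive real numbers such that $\sum_{k>n}\frac{1-w_k}{1-w_{k+1}}\rho_k = o(\rho_n)$ as $n\to\infty$ (in particular these tail sums are finite). Then there exists a holomorphic function $\phi$ on the open unit disk $\mathbb{D}=\{z\in\mathbb{C}:|z|<1\}$ such that $|\phi(z)|\ge1$ for all $z\in\mathbb{D}$ and, for every $n\ge1$, $\inf_{r\in[w_n,w_{n+1}]}\log\left|\frac{\phi(r w_n)}{\phi(w_n)}\right| \ge \frac{\rho_n}{1-w_n}$. -/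
/-!
Take `φ = exp F` with `F z = ∑ₖ cₖ ((1 - wₖ)⁻¹ - (2 - wₖ - z)⁻¹)`. Each summand has a pole at
`2 - wₖ > 1`, vanishes at `z = 1`, has nonnegative real part on `Re z ≤ 1` (so `‖φ‖ ≥ 1`), and
is real and decreasing on `(-1, 1)`. Hence `log |φ(r wₙ)/φ(wₙ)|` is a sum of nonnegative terms, and
the `n`-th term alone is at least `cₙ wₙ (1 - wₙ₊₁) / (6 (1 - wₙ)²)`, which is `ρₙ/(1 - wₙ)` up to
the factor `wₙ / w₁ ≥ 1` for `cₖ = 6 ρₖ (1 - wₖ) / (w₁ (1 - wₖ₊₁))`. The series converges locally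
uniformly as soon as `∑ cₖ/(1 - wₖ) < ∞`, i.e. `∑ ρₖ/(1 - wₖ₊₁) < ∞`; the ratio of consecutive
terms of the latter is the first term of the tail sum divided by `ρₙ`, which tends to `0`.
-/

open Filter

noncomputable section

namespace RadialGrowth

-- `bump (1 - wₖ)` is the `k`-th summand of `F` above, up to the factor `cₖ`.
def bump (δ : ℝ) (z : ℂ) : ℂ := (δ : ℂ)⁻¹ - (1 + δ - z)⁻¹

lemma re_inv_le_inv_re {u : ℂ} (hu : 0 < u.re) : (u⁻¹).re ≤ (u.re)⁻¹ := by
  rw [Complex.inv_re, ← div_self_mul_self']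
  exact div_le_div_of_nonneg_left hu.le (mul_pos hu hu) (Complex.re_sq_le_normSq u)

lemma re_bump_nonneg {δ : ℝ} (hδ : 0 < δ) {z : ℂ} (hz : z.re ≤ 1) : 0 ≤ (bump δ z).re := by
  have hre : δ ≤ (1 + δ - z).re := by
    simp only [Complex.sub_re, Complex.add_re, Complex.one_re, Complex.ofReal_re]; linarith
  have := re_inv_le_inv_re (hδ.trans_le hre)
  have := inv_anti₀ hδ hre
  simp only [bump, Complex.sub_re, ← Complex.ofReal_inv, Complex.ofReal_re]
  linarith

lemma bump_ofReal (δ x : ℝ) : bump δ x = ((δ⁻¹ - (1 + δ - x)⁻¹ : ℝ) : ℂ) := by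
  simp [bump]

lemma re_bump_ofReal_le {δ : ℝ} (hδ : 0 < δ) {a b : ℝ} (hab : a ≤ b) (hb : b < 1) :
    (bump δ b).re ≤ (bump δ a).re := by
  simp only [bump_ofReal, Complex.ofReal_re, sub_le_sub_iff_left]
  exact inv_anti₀ (by linarith) (by linarith)

lemma bump_eq_div {δ : ℝ} (hδ : 0 < δ) {z : ℂ} (hz : 1 + δ - z ≠ 0) :
    bump δ z = (1 - z) / (δ * (1 + δ - z)) := by
  have : (δ : ℂ) ≠ 0 := by exact_mod_cast hδ.ne'
  rw [bump, inv_sub_inv this hz]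
  ring

lemma norm_bump_le {δ R : ℝ} (hδ : 0 < δ) (hR : R < 1) {z : ℂ} (hz : ‖z‖ ≤ R) :
    ‖bump δ z‖ ≤ 2 / (1 - R) / δ := by
  have hden : 1 - R ≤ ‖1 + δ - z‖ := by
    calc 1 - R ≤ (1 + δ - z).re := by
          have := (Complex.re_le_norm z).trans hz
          simp only [Complex.sub_re, Complex.add_re, Complex.one_re, Complex.ofReal_re]
          linarith
      _ ≤ ‖1 + δ - z‖ := Complex.re_le_norm _
  have hnum : ‖1 - z‖ ≤ 2 := by
    calc ‖1 - z‖ ≤ ‖(1 : ℂ)‖ + ‖z‖ := norm_sub_le _ _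
      _ ≤ 2 := by rw [norm_one]; linarith
  have hne : 1 + δ - z ≠ 0 := norm_pos_iff.1 ((sub_pos.2 hR).trans_le hden)
  rw [bump_eq_div hδ hne, norm_div, norm_mul, Complex.norm_real, Real.norm_of_nonneg hδ.le,
    div_div, mul_comm δ]
  exact div_le_div₀ zero_le_two hnum (by have := sub_pos.2 hR; positivity)
    (mul_le_mul_of_nonneg_right hden hδ.le)

lemma differentiableOn_bump {δ : ℝ} (hδ : 0 < δ) :
    DifferentiableOn ℂ (bump δ) (Metric.ball 0 1) := by
  refine (differentiableOn_const _).sub (DifferentiableOn.inv (by fun_prop) fun z hz h => ?_)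
  have := (Complex.re_le_norm z).trans_lt (mem_ball_zero_iff.1 hz)
  have h' := congrArg Complex.re h
  simp only [Complex.sub_re, Complex.add_re, Complex.one_re, Complex.ofReal_re,
    Complex.zero_re] at h'
  linarith

lemma le_re_bump_sub {w r w' : ℝ} (hw : 0 < w) (hwr : w ≤ r) (hrw' : r ≤ w') (hw' : w' < 1) :
    w * (1 - w') / (6 * (1 - w) ^ 2) ≤
      (bump (1 - w) ((r * w : ℝ) : ℂ)).re - (bump (1 - w) w).re := by
  have hδ : 0 < 1 - w := by linarith
  have hD : 0 < 2 - w - r * w := by nlinarith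
  have hD3 : 2 - w - r * w ≤ 3 * (1 - w) := by nlinarith [sq_nonneg (1 - w)]
  have hdiff : (bump (1 - w) ((r * w : ℝ) : ℂ)).re - (bump (1 - w) w).re
      = w * (1 - r) / (2 * (1 - w) * (2 - w - r * w)) := by
    simp only [bump_ofReal, Complex.ofReal_re, sub_sub_sub_cancel_left]
    rw [show 1 + (1 - w) - w = 2 * (1 - w) by ring,
      show 1 + (1 - w) - r * w = 2 - w - r * w by ring, inv_sub_inv (by positivity) hD.ne']
    ring
  rw [hdiff]
  calc w * (1 - w') / (6 * (1 - w) ^ 2) = w * (1 - w') / (2 * (1 - w) * (3 * (1 - w))) := by ring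
    _ ≤ w * (1 - r) / (2 * (1 - w) * (2 - w - r * w)) := by
      gcongr
      nlinarith

def bumpSeries (c δ : ℕ → ℝ) (z : ℂ) : ℂ := ∑' k, c k * bump (δ k) z

variable {c δ : ℕ → ℝ}

lemma norm_mul_bump_le (hδ : ∀ k, 0 < δ k) (hc : ∀ k, 0 ≤ c k) {R : ℝ} (hR : R < 1) {z : ℂ}
    (hz : ‖z‖ ≤ R) (k : ℕ) : ‖c k * bump (δ k) z‖ ≤ 2 / (1 - R) * (c k / δ k) := by
  rw [norm_mul, Complex.norm_real, Real.norm_of_nonneg (hc k)]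
  calc c k * ‖bump (δ k) z‖ ≤ c k * (2 / (1 - R) / δ k) :=
        mul_le_mul_of_nonneg_left (norm_bump_le (hδ k) hR hz) (hc k)
    _ = 2 / (1 - R) * (c k / δ k) := by ring

lemma summable_mul_bump (hδ : ∀ k, 0 < δ k) (hc : ∀ k, 0 ≤ c k)
    (hcδ : Summable fun k => c k / δ k) {z : ℂ} (hz : ‖z‖ < 1) :
    Summable fun k => c k * bump (δ k) z :=
  .of_norm_bounded (hcδ.mul_left _) (norm_mul_bump_le hδ hc hz le_rfl)

lemma differentiableOn_bumpSeries (hδ : ∀ k, 0 < δ k) (hc : ∀ k, 0 ≤ c k)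
    (hcδ : Summable fun k => c k / δ k) :
    DifferentiableOn ℂ (bumpSeries c δ) (Metric.ball 0 1) := by
  intro z hz
  obtain ⟨R, hzR, hR⟩ := exists_between (mem_ball_zero_iff.1 hz)
  have hdiff : DifferentiableOn ℂ (bumpSeries c δ) (Metric.ball 0 R) :=
    Complex.differentiableOn_tsum_of_summable_norm (hcδ.mul_left _)
      (fun k => ((differentiableOn_bump (hδ k)).const_mul _).mono
        (Metric.ball_subset_ball hR.le))
      Metric.isOpen_ball
      (fun k ζ hζ => norm_mul_bump_le hδ hc hR (mem_ball_zero_iff.1 hζ).le k)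
  exact (hdiff.differentiableAt
    (Metric.isOpen_ball.mem_nhds (mem_ball_zero_iff.2 hzR))).differentiableWithinAt

lemma re_bumpSeries (hδ : ∀ k, 0 < δ k) (hc : ∀ k, 0 ≤ c k)
    (hcδ : Summable fun k => c k / δ k) {z : ℂ} (hz : ‖z‖ < 1) :
    HasSum (fun k => c k * (bump (δ k) z).re) (bumpSeries c δ z).re := by
  simpa only [bumpSeries, Complex.re_ofReal_mul] using
    Complex.hasSum_re (summable_mul_bump hδ hc hcδ hz).hasSum

lemma re_bumpSeries_nonneg (hδ : ∀ k, 0 < δ k) (hc : ∀ k, 0 ≤ c k)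
    (hcδ : Summable fun k => c k / δ k) {z : ℂ} (hz : ‖z‖ < 1) :
    0 ≤ (bumpSeries c δ z).re :=
  (re_bumpSeries hδ hc hcδ hz).nonneg fun k =>
    mul_nonneg (hc k) (re_bump_nonneg (hδ k) ((Complex.re_le_norm z).trans hz.le))

lemma mul_re_bump_sub_le (hδ : ∀ k, 0 < δ k) (hc : ∀ k, 0 ≤ c k)
    (hcδ : Summable fun k => c k / δ k) {a b : ℝ} (ha : -1 < a) (hab : a ≤ b)
    (hb : b < 1) (n : ℕ) :
    c n * ((bump (δ n) a).re - (bump (δ n) b).re) ≤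
      (bumpSeries c δ a).re - (bumpSeries c δ b).re := by
  have hnorm : ∀ x : ℝ, -1 < x → x < 1 → ‖(x : ℂ)‖ < 1 := fun x h₁ h₂ => by
    rw [Complex.norm_real, Real.norm_eq_abs, abs_lt]; exact ⟨h₁, h₂⟩
  have hsub := (re_bumpSeries hδ hc hcδ (hnorm a ha (hab.trans_lt hb))).sub
    (re_bumpSeries hδ hc hcδ (hnorm b (ha.trans_le hab) hb))
  simp only [← mul_sub] at hsub
  exact le_hasSum hsub n fun k _ =>
    mul_nonneg (hc k) (sub_nonneg.2 (re_bump_ofReal_le (hδ k) hab hb))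

lemma summable_div_one_sub_succ (w ρ : ℕ → ℝ) (hw : ∀ n, w n < 1) (hρ : ∀ n, 0 < ρ n)
    (hsum : Summable (fun k : ℕ => (1 - w k) / (1 - w (k + 1)) * ρ k))
    (hlittleo : Tendsto
      (fun n : ℕ => (∑' k : ℕ, (1 - w (n + 1 + k)) / (1 - w (n + 1 + k + 1)) * ρ (n + 1 + k)) / ρ n)
      atTop (nhds 0)) :
    Summable fun k => ρ k / (1 - w (k + 1)) := by
  have hδ : ∀ n, 0 < 1 - w n := fun n => sub_pos.2 (hw n)
  have hterm : ∀ k, 0 ≤ (1 - w k) / (1 - w (k + 1)) * ρ k := fun k =>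
    mul_nonneg (div_nonneg (hδ k).le (hδ (k + 1)).le) (hρ k).le
  have hratio : ∀ n, ‖ρ (n + 1) / (1 - w (n + 1 + 1))‖ / ‖ρ n / (1 - w (n + 1))‖
      = (1 - w (n + 1)) / (1 - w (n + 1 + 1)) * ρ (n + 1) / ρ n := by
    intro n
    rw [Real.norm_of_nonneg (div_pos (hρ _) (hδ _)).le,
      Real.norm_of_nonneg (div_pos (hρ _) (hδ _)).le]
    field_simp
  have hhead : ∀ n, (1 - w (n + 1)) / (1 - w (n + 1 + 1)) * ρ (n + 1)
      ≤ ∑' k : ℕ, (1 - w (n + 1 + k)) / (1 - w (n + 1 + k + 1)) * ρ (n + 1 + k) := fun n => by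
    simpa only [zero_add, add_comm _ (n + 1)] using
      ((summable_nat_add_iff (n + 1)).2 hsum).le_tsum 0 (fun k _ => hterm _)
  refine summable_of_ratio_test_tendsto_lt_one zero_lt_one
    (.of_forall fun n => (div_pos (hρ n) (hδ _)).ne') ?_
  refine tendsto_of_tendsto_of_tendsto_of_le_of_le tendsto_const_nhds hlittleo
    (fun n => by positivity) fun n => ?_
  rw [hratio]
  exact div_le_div_of_nonneg_right (hhead n) (hρ n).le

def radialWeight (w ρ : ℕ → ℝ) (k : ℕ) : ℝ := 6 * ρ k * (1 - w k) / (w 1 * (1 - w (k + 1)))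

lemma radialWeight_nonneg {w ρ : ℕ → ℝ} (hw : ∀ n, w n ∈ Set.Ioo 0 1) (hρ : ∀ n, 0 < ρ n)
    (k : ℕ) :
    0 ≤ radialWeight w ρ k := by
  have := hρ k; have := (hw k).2; have := (hw (k + 1)).2; have := (hw 1).1
  unfold radialWeight
  apply div_nonneg <;> nlinarith

lemma radialWeight_div {w : ℕ → ℝ} (ρ : ℕ → ℝ) (hw : ∀ n, w n ∈ Set.Ioo 0 1) (k : ℕ) :
    radialWeight w ρ k / (1 - w k) = 6 / w 1 * (ρ k / (1 - w (k + 1))) := by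
  have := (hw k).2; have := (hw (k + 1)).2; have := (hw 1).1
  unfold radialWeight
  field_simp [show 1 - w k ≠ 0 by linarith]

lemma div_le_radialWeight_mul {w ρ : ℕ → ℝ} (hw : ∀ n, w n ∈ Set.Ioo 0 1) (hρ : ∀ n, 0 < ρ n)
    {n : ℕ} (hn : w 1 ≤ w n) :
    ρ n / (1 - w n) ≤ radialWeight w ρ n * (w n * (1 - w (n + 1)) / (6 * (1 - w n) ^ 2)) := by
  have := (hw n).2; have := (hw (n + 1)).2; have := (hw 1).1
  have hcn : radialWeight w ρ n * (w n * (1 - w (n + 1)) / (6 * (1 - w n) ^ 2))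
      = ρ n / (1 - w n) * (w n / w 1) := by
    unfold radialWeight
    field_simp [show 1 - w n ≠ 0 by linarith, show 1 - w (n + 1) ≠ 0 by linarith]
  rw [hcn]
  exact le_mul_of_one_le_right (div_pos (hρ n) (by linarith)).le ((one_le_div (hw 1).1).2 hn)

end RadialGrowth

end

open RadialGrowth

theorem exists_holomorphic_with_radial_growth_general
    (w ρ : ℕ → ℝ) (hw_mono : StrictMono w) (hw_mem : ∀ n, w n ∈ Set.Ioo (0 : ℝ) 1)
    (hρ : ∀ n, 0 < ρ n)
    (hsum : Summable (fun k : ℕ => (1 - w k) / (1 - w (k + 1)) * ρ k))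
    (hlittleo : Tendsto
      (fun n : ℕ => (∑' k : ℕ, (1 - w (n + 1 + k)) / (1 - w (n + 1 + k + 1)) * ρ (n + 1 + k)) / ρ n)
      atTop (nhds 0)) :
    ∃ φ : ℂ → ℂ, DifferentiableOn ℂ φ (Metric.ball (0 : ℂ) 1) ∧
      (∀ z ∈ Metric.ball (0 : ℂ) 1, 1 ≤ ‖φ z‖) ∧
      ∀ n : ℕ, 1 ≤ n → ∀ r ∈ Set.Icc (w n) (w (n + 1)),
        ρ n / (1 - w n) ≤ Real.log (‖φ (↑(r * w n)) / φ (↑(w n))‖) := by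
  have hw1 : ∀ k, w k < 1 := fun k => (hw_mem k).2
  have hδ : ∀ k, 0 < 1 - w k := fun k => sub_pos.2 (hw1 k)
  have hc := radialWeight_nonneg hw_mem hρ
  have hcδ : Summable fun k => radialWeight w ρ k / (1 - w k) := by
    simpa only [radialWeight_div ρ hw_mem] using
      (summable_div_one_sub_succ w ρ hw1 hρ hsum hlittleo).mul_left (6 / w 1)
  refine ⟨fun z => Complex.exp (bumpSeries (radialWeight w ρ) (1 - w ·) z),
    (differentiableOn_bumpSeries hδ hc hcδ).cexp, fun z hz => ?_, fun n hn r hr => ?_⟩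
  · rw [Complex.norm_exp]
    exact Real.one_le_exp (re_bumpSeries_nonneg hδ hc hcδ (mem_ball_zero_iff.1 hz))
  · have hrw : r * w n ≤ w n :=
      mul_le_of_le_one_left (hw_mem n).1.le (hr.2.trans (hw1 (n + 1)).le)
    have hrw_pos : 0 < r * w n := mul_pos ((hw_mem n).1.trans_le hr.1) (hw_mem n).1
    rw [← Complex.exp_sub, Complex.norm_exp, Real.log_exp, Complex.sub_re]
    calc ρ n / (1 - w n)
        ≤ radialWeight w ρ n * (w n * (1 - w (n + 1)) / (6 * (1 - w n) ^ 2)) :=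
          div_le_radialWeight_mul hw_mem hρ (hw_mono.monotone hn)
      _ ≤ radialWeight w ρ n * ((bump (1 - w n) ↑(r * w n)).re - (bump (1 - w n) ↑(w n)).re) :=
          mul_le_mul_of_nonneg_left (le_re_bump_sub (hw_mem n).1 hr.1 hr.2 (hw1 (n + 1))) (hc n)
      _ ≤ _ := mul_re_bump_sub_le hδ hc hcδ (by linarith) hrw (hw1 n) n

/-- Lemma 3.3 (without outerness): given a strictly increasing sequence `w n ∈ (0,1)`
tending to `1` and positive `ρ n` with `∑_{k>n} ((1-w_k)/(1-w_{k+1})) ρ_k = o(ρ_n)`,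
there is a holomorphic function `φ` on the unit disk with `|φ| ≥ 1` and
`log |φ(r wₙ)/φ(wₙ)| ≥ ρₙ/(1-wₙ)` for all `n ≥ 1` and all `r ∈ [wₙ, wₙ₊₁]`. -/
theorem exists_holomorphic_with_radial_growth
    (w ρ : ℕ → ℝ) (hw_mono : StrictMono w) (hw_mem : ∀ n, w n ∈ Set.Ioo (0 : ℝ) 1)
    (hw_lim : Tendsto w atTop (nhds 1))
    (hρ : ∀ n, 0 < ρ n)
    (hsum : Summable (fun k : ℕ => (1 - w k) / (1 - w (k + 1)) * ρ k))
    (hlittleo : Tendsto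
      (fun n : ℕ => (∑' k : ℕ, (1 - w (n + 1 + k)) / (1 - w (n + 1 + k + 1)) * ρ (n + 1 + k)) / ρ n)
      atTop (nhds 0)) :
    ∃ φ : ℂ → ℂ, DifferentiableOn ℂ φ (Metric.ball (0 : ℂ) 1) ∧
      (∀ z ∈ Metric.ball (0 : ℂ) 1, 1 ≤ ‖φ z‖) ∧
      ∀ n : ℕ, 1 ≤ n → ∀ r ∈ Set.Icc (w n) (w (n + 1)),
        ρ n / (1 - w n) ≤ Real.log (‖φ (↑(r * w n)) / φ (↑(w n))‖) :=
  exists_holomorphic_with_radial_growth_general w ρ hw_mono hw_mem hρ hsum hlittleo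
end

section
/- Let $(w_n)_{n\ge1}$ be a strictly increasing sequence in $(0,1)$ with $w_n\to1$, and let $(\rho_n)_{n\ge1}$ be positive reals with $\sum_{k>n}\frac{1-w_k}{1-w_{k+1}}\rho_k = o(\rho_n)$ as $n\to\infty$. Then there exist a constant $C>0$ and an integer $N$ such that for all $n\ge N$ and all $r\in[w_n,w_{n+1}]$, $P_h\!\left(\frac{1-r w_n}{1+r w_n}\right) - P_h\!\left(\frac{1-w_n}{1+w_n}\right) \ge C\,\frac{\rho_n}{1-w_n}$. -/
open Filter MeasureTheory

/-- `t_k := (1 - w_k²)/(1 + w_k²)`. -/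
noncomputable def tseq (w : ℕ → ℝ) (k : ℕ) : ℝ := (1 - w k ^ 2) / (1 + w k ^ 2)

/-- `ε_k := ((1 - w_k)/(1 - w_{k+1})) ρ_k`. -/
noncomputable def epsseq (w ρ : ℕ → ℝ) (k : ℕ) : ℝ := (1 - w k) / (1 - w (k + 1)) * ρ k

/-- `h := ∑_{k≥1} (ε_k/t_k) 1_{[2t_k, 3t_k]}`. -/
noncomputable def hfun (w ρ : ℕ → ℝ) (x : ℝ) : ℝ :=
  ∑' k : ℕ, Set.indicator (Set.Icc (2 * tseq w (k + 1)) (3 * tseq w (k + 1)))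
    (fun _ => epsseq w ρ (k + 1) / tseq w (k + 1)) x

/-- `P_h(y) := (1/π) ∫_ℝ y/(y² + x²) h(x) dx`, the Poisson integral of `h` for the
upper half-plane evaluated at `iy`. -/
noncomputable def Ph (w ρ : ℕ → ℝ) (y : ℝ) : ℝ :=
  (1 / Real.pi) * ∫ x : ℝ, y / (y ^ 2 + x ^ 2) * hfun w ρ x

/-!
Up to the factor `1 / π`, `P_h(y)` is the sum over `k` of the bump integrals
`(ε_k / t_k) ∫_{2t_k}^{3t_k} y / (y² + x²) dx`. Raising the height from `y₀ = (1 - w_n)/(1 + w_n)`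
to `y_r = (1 - r w_n)/(1 + r w_n) ≤ t_n` does not decrease the bumps with `k ≤ n`, since on
`[2t, 3t]` the kernel increases in `y` as long as `y ≤ t`. The `n`-th bump gains at least a constant
times `ε_n (y_r - y₀) / t_n²`, which is of order `ρ_n / (1 - w_n)` because `y_r - y₀ ≳ 1 - w_{n+1}`
and `t_n ≲ 1 - w_n`. Each bump with `k > n` loses at most `ε_k / y₀ ≲ ε_k / (1 - w_n)`, and by the
little-o condition these losses add up to `o(ρ_n / (1 - w_n))`.
-/

open Set

noncomputable def halfPlanePoissonKernel (y x : ℝ) : ℝ := y / (y ^ 2 + x ^ 2)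

section PoissonKernel

variable {y y' x t : ℝ}

lemma continuous_halfPlanePoissonKernel (hy : 0 < y) : Continuous (halfPlanePoissonKernel y) :=
  continuous_const.div (by fun_prop) fun x => by positivity

lemma halfPlanePoissonKernel_nonneg (hy : 0 < y) (x : ℝ) : 0 ≤ halfPlanePoissonKernel y x := by
  unfold halfPlanePoissonKernel
  positivity

lemma halfPlanePoissonKernel_le_inv (hy : 0 < y) (x : ℝ) :
    halfPlanePoissonKernel y x ≤ 1 / y := by
  rw [halfPlanePoissonKernel, div_le_div_iff₀ (by positivity) hy]
  nlinarith [sq_nonneg x]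

lemma halfPlanePoissonKernel_sub (hy : 0 < y) (hy' : 0 < y') (x : ℝ) :
    halfPlanePoissonKernel y x - halfPlanePoissonKernel y' x =
      (y - y') * (x ^ 2 - y * y') / ((y ^ 2 + x ^ 2) * (y' ^ 2 + x ^ 2)) := by
  rw [halfPlanePoissonKernel, halfPlanePoissonKernel,
    div_sub_div _ _ (by positivity) (by positivity)]
  ring

lemma halfPlanePoissonKernel_sub_ge (hy' : 0 < y') (hyy' : y' ≤ y) (hyt : y ≤ t)
    (hx : x ∈ Icc (2 * t) (3 * t)) :
    3 / 100 * (y - y') / t ^ 2 ≤ halfPlanePoissonKernel y x - halfPlanePoissonKernel y' x := by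
  obtain ⟨hx₂, hx₃⟩ := hx
  have hy : 0 < y := hy'.trans_le hyy'
  have ht : 0 < t := hy.trans_le hyt
  have hden : (y ^ 2 + x ^ 2) * (y' ^ 2 + x ^ 2) ≤ 10 * t ^ 2 * (10 * t ^ 2) := by
    gcongr <;> nlinarith
  have hnum : (y - y') * (3 * t ^ 2) ≤ (y - y') * (x ^ 2 - y * y') := by
    gcongr
    nlinarith [mul_le_mul hyt (hyy'.trans hyt) hy'.le ht.le,
      mul_le_mul hx₂ hx₂ (by positivity) (by linarith)]
  rw [halfPlanePoissonKernel_sub hy hy']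
  calc 3 / 100 * (y - y') / t ^ 2
      = (y - y') * (3 * t ^ 2) / (10 * t ^ 2 * (10 * t ^ 2)) := by field_simp; ring
    _ ≤ _ := by
        gcongr ?_ / ?_
        nlinarith

end PoissonKernel

-- Equals `arctan (b / y) - arctan (a / y)`, π times the harmonic measure of `[a, b]` at `iy`.
noncomputable def poissonIntegralIcc (a b y : ℝ) : ℝ :=
  ∫ x in Icc a b, halfPlanePoissonKernel y x

section PoissonIntegralIcc

variable {a b y y' t : ℝ}

lemma integrableOn_halfPlanePoissonKernel (hy : 0 < y) :
    IntegrableOn (halfPlanePoissonKernel y) (Icc a b) :=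
  (continuous_halfPlanePoissonKernel hy).integrableOn_Icc

lemma poissonIntegralIcc_nonneg (hy : 0 < y) : 0 ≤ poissonIntegralIcc a b y :=
  setIntegral_nonneg measurableSet_Icc fun x _ => halfPlanePoissonKernel_nonneg hy x

lemma poissonIntegralIcc_le (hab : a ≤ b) (hy : 0 < y) :
    poissonIntegralIcc a b y ≤ (b - a) / y := by
  calc poissonIntegralIcc a b y ≤ ∫ _ in Icc a b, 1 / y :=
        setIntegral_mono_on (integrableOn_halfPlanePoissonKernel hy)
          (integrableOn_const measure_Icc_lt_top.ne) measurableSet_Icc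
          fun x _ => halfPlanePoissonKernel_le_inv hy x
    _ = (b - a) / y := by
        rw [setIntegral_const, Real.volume_real_Icc_of_le hab, smul_eq_mul, mul_one_div]

lemma poissonIntegralIcc_sub_ge (hy' : 0 < y') (hyy' : y' ≤ y) (hyt : y ≤ t) :
    3 / 100 * ((y - y') / t) ≤
      poissonIntegralIcc (2 * t) (3 * t) y - poissonIntegralIcc (2 * t) (3 * t) y' := by
  have ht : 0 < t := hy'.trans_le (hyy'.trans hyt)
  have hy := hy'.trans_le hyy'
  calc 3 / 100 * ((y - y') / t)
      = ∫ _ in Icc (2 * t) (3 * t), 3 / 100 * (y - y') / t ^ 2 := by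
        rw [setIntegral_const, Real.volume_real_Icc_of_le (by linarith), smul_eq_mul]
        field_simp
        ring
    _ ≤ ∫ x in Icc (2 * t) (3 * t),
          (halfPlanePoissonKernel y x - halfPlanePoissonKernel y' x) :=
        setIntegral_mono_on (integrableOn_const measure_Icc_lt_top.ne)
          ((integrableOn_halfPlanePoissonKernel hy).sub (integrableOn_halfPlanePoissonKernel hy'))
          measurableSet_Icc fun x hx => halfPlanePoissonKernel_sub_ge hy' hyy' hyt hx
    _ = _ := integral_sub (integrableOn_halfPlanePoissonKernel hy)
        (integrableOn_halfPlanePoissonKernel hy')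

end PoissonIntegralIcc

lemma integral_halfPlanePoissonKernel_mul_tsum_indicator {a b c : ℕ → ℝ} {y : ℝ} (hy : 0 < y)
    (hab : ∀ k, a k ≤ b k) (hc : ∀ k, 0 ≤ c k) (hsum : Summable fun k => c k * (b k - a k)) :
    ∫ x, halfPlanePoissonKernel y x * ∑' k, (Icc (a k) (b k)).indicator (fun _ => c k) x =
      ∑' k, c k * poissonIntegralIcc (a k) (b k) y := by
  set F : ℕ → ℝ → ℝ :=
    fun k => (Icc (a k) (b k)).indicator fun x => c k * halfPlanePoissonKernel y x
  have hF : ∀ k x, ‖F k x‖ = F k x := fun k x => by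
    refine Real.norm_of_nonneg (indicator_nonneg (fun x _ => ?_) x)
    exact mul_nonneg (hc k) (halfPlanePoissonKernel_nonneg hy x)
  have hFint : ∀ k, ∫ x, F k x = c k * poissonIntegralIcc (a k) (b k) y := fun k => by
    rw [integral_indicator measurableSet_Icc, integral_const_mul, poissonIntegralIcc]
  have hFsum : Summable fun k => ∫ x, ‖F k x‖ := by
    simp only [hF, hFint]
    refine hsum.div_const y |>.of_nonneg_of_le
      (fun k => mul_nonneg (hc k) (poissonIntegralIcc_nonneg hy)) fun k => ?_
    rw [mul_div_assoc]
    exact mul_le_mul_of_nonneg_left (poissonIntegralIcc_le (hab k) hy) (hc k)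
  have hFi : ∀ k, Integrable (F k) :=
    fun k => IntegrableOn.integrable_indicator
      ((integrableOn_halfPlanePoissonKernel hy).const_mul (c k)) measurableSet_Icc
  simp_rw [← hFint, integral_tsum_of_summable_integral_norm hFi hFsum, ← tsum_mul_left]
  congr 1 with x
  refine tsum_congr fun k => ?_
  simp only [F, indicator_apply]
  split_ifs <;> ring

lemma sub_tsum_le_tsum_of_head_nonneg {D e : ℕ → ℝ} {A : ℝ} {m : ℕ} (hD : Summable D)
    (he : Summable e) (hhead : ∀ k < m, 0 ≤ D k) (hm : A ≤ D m)
    (htail : ∀ k, -e k ≤ D (k + (m + 1))) :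
    A - ∑' k, e k ≤ ∑' k, D k := by
  rw [← hD.sum_add_tsum_nat_add (m + 1), Finset.sum_range_succ]
  have hhead_sum : 0 ≤ ∑ k ∈ Finset.range m, D k :=
    Finset.sum_nonneg fun k hk => hhead k (Finset.mem_range.1 hk)
  have htail_sum : -∑' k, e k ≤ ∑' k, D (k + (m + 1)) := by
    rw [← tsum_neg]
    exact he.neg.tsum_le_tsum htail ((summable_nat_add_iff _).2 hD)
  linarith

-- The heights in the theorem are `cayley (r * w n)` and `cayley (w n)`;
-- also `tseq w k = cayley (w k ^ 2)`.
noncomputable def cayley (s : ℝ) : ℝ := (1 - s) / (1 + s)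

section Cayley

variable {u v a r : ℝ}

lemma cayley_pos (hu : -1 < u) (hu1 : u < 1) : 0 < cayley u :=
  div_pos (by linarith) (by linarith)

lemma cayley_sub_cayley (hu : -1 < u) (hv : -1 < v) :
    cayley u - cayley v = 2 * (v - u) / ((1 + u) * (1 + v)) := by
  rw [cayley, cayley, div_sub_div _ _ (by linarith) (by linarith)]
  ring

lemma cayley_le_cayley (hu : -1 < u) (huv : u ≤ v) : cayley v ≤ cayley u := by
  have : 0 ≤ cayley u - cayley v := by
    rw [cayley_sub_cayley hu (hu.trans_le huv)]
    exact div_nonneg (by linarith) (by nlinarith)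
  linarith

lemma cayley_mul_mem_Icc (ha : 0 ≤ a) (har : a ≤ r) (hr1 : r ≤ 1) :
    cayley (r * a) ∈ Icc (cayley a) (cayley (a ^ 2)) :=
  ⟨cayley_le_cayley (by nlinarith) (mul_le_of_le_one_left ha hr1),
    cayley_le_cayley (by nlinarith) (by rw [sq]; exact mul_le_mul_of_nonneg_right har ha)⟩

lemma one_sub_div_four_le_cayley_mul_sub_cayley (ha : 1 / 2 ≤ a) (ha1 : a ≤ 1) (hr : 0 ≤ r)
    (hr1 : r ≤ 1) : (1 - r) / 4 ≤ cayley (r * a) - cayley a := by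
  have ha0 : 0 ≤ a := by linarith
  rw [cayley_sub_cayley (by nlinarith) (by linarith), le_div_iff₀ (by positivity)]
  nlinarith [mul_le_mul hr1 ha1 ha0 zero_le_one, mul_nonneg (sub_nonneg.2 hr1) (mul_nonneg hr ha0),
    mul_nonneg (sub_nonneg.2 hr1) (sub_nonneg.2 ha1),
    mul_nonneg (sub_nonneg.2 hr1) (sub_nonneg.2 ha)]

lemma cayley_sq_le (ha1 : a ≤ 1) : cayley (a ^ 2) ≤ 2 * (1 - a) := by
  rw [cayley, div_le_iff₀ (by positivity)]
  nlinarith [mul_nonneg (sub_nonneg.2 ha1) (sq_nonneg (1 - a)),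
    mul_nonneg (sub_nonneg.2 ha1) (sq_nonneg a)]

lemma one_sub_div_two_le_cayley (ha : -1 < a) (ha1 : a ≤ 1) : (1 - a) / 2 ≤ cayley a := by
  rw [cayley]
  exact div_le_div_of_nonneg_left (by linarith) (by linarith) (by linarith)

end Cayley

section Sequences

variable {w ρ : ℕ → ℝ}

lemma tseq_pos (hw_mem : ∀ n, w n ∈ Ioo 0 1) (k : ℕ) : 0 < tseq w k :=
  cayley_pos (by nlinarith) (pow_lt_one₀ (hw_mem k).1.le (hw_mem k).2 two_ne_zero)

lemma tseq_antitone (hw_mono : Monotone w) (hw_mem : ∀ n, w n ∈ Ioo 0 1) : Antitone (tseq w) :=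
  fun k _ hkm => cayley_le_cayley (by nlinarith)
    (pow_le_pow_left₀ (hw_mem k).1.le (hw_mono hkm) 2)

lemma epsseq_nonneg (hw_mem : ∀ n, w n ∈ Ioo 0 1) (hρ : ∀ n, 0 ≤ ρ n) (k : ℕ) :
    0 ≤ epsseq w ρ k :=
  mul_nonneg (div_nonneg (by linarith [(hw_mem k).2]) (by linarith [(hw_mem (k + 1)).2])) (hρ k)

end Sequences

-- `π P_{h_k}(y)` for the `k`-th bump `h_k = (ε_k / t_k) 1_{[2 t_k, 3 t_k]}` of `h`.
noncomputable def bumpPoissonIntegral (w ρ : ℕ → ℝ) (k : ℕ) (y : ℝ) : ℝ :=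
  epsseq w ρ k / tseq w k * poissonIntegralIcc (2 * tseq w k) (3 * tseq w k) y

section Bumps

variable {w ρ : ℕ → ℝ} {y y' : ℝ} (hw_mem : ∀ n, w n ∈ Ioo 0 1) (hρ : ∀ n, 0 ≤ ρ n)
include hw_mem hρ

lemma bumpPoissonIntegral_nonneg (hy : 0 < y) (k : ℕ) : 0 ≤ bumpPoissonIntegral w ρ k y :=
  mul_nonneg (div_nonneg (epsseq_nonneg hw_mem hρ k) (tseq_pos hw_mem k).le)
    (poissonIntegralIcc_nonneg hy)

lemma bumpPoissonIntegral_le (hy : 0 < y) (k : ℕ) :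
    bumpPoissonIntegral w ρ k y ≤ epsseq w ρ k / y := by
  have ht := tseq_pos hw_mem k
  calc bumpPoissonIntegral w ρ k y
      ≤ epsseq w ρ k / tseq w k * ((3 * tseq w k - 2 * tseq w k) / y) :=
        mul_le_mul_of_nonneg_left (poissonIntegralIcc_le (by linarith) hy)
          (div_nonneg (epsseq_nonneg hw_mem hρ k) ht.le)
    _ = epsseq w ρ k / y := by field_simp; ring

lemma neg_div_le_bumpPoissonIntegral_sub (hy : 0 < y) (hy' : 0 < y') (k : ℕ) :
    -(epsseq w ρ k / y') ≤ bumpPoissonIntegral w ρ k y - bumpPoissonIntegral w ρ k y' := by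
  linarith [bumpPoissonIntegral_nonneg hw_mem hρ hy k, bumpPoissonIntegral_le hw_mem hρ hy' k]

lemma bumpPoissonIntegral_sub_ge {k : ℕ} (hy' : 0 < y') (hyy' : y' ≤ y) (hyt : y ≤ tseq w k) :
    3 / 100 * epsseq w ρ k * (y - y') / tseq w k ^ 2 ≤
      bumpPoissonIntegral w ρ k y - bumpPoissonIntegral w ρ k y' := by
  have ht := tseq_pos hw_mem k
  calc 3 / 100 * epsseq w ρ k * (y - y') / tseq w k ^ 2
      = epsseq w ρ k / tseq w k * (3 / 100 * ((y - y') / tseq w k)) := by field_simp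
    _ ≤ _ := by
        rw [bumpPoissonIntegral, bumpPoissonIntegral, ← mul_sub]
        exact mul_le_mul_of_nonneg_left (poissonIntegralIcc_sub_ge hy' hyy' hyt)
          (div_nonneg (epsseq_nonneg hw_mem hρ k) ht.le)

lemma bumpPoissonIntegral_sub_nonneg {k : ℕ} (hy' : 0 < y') (hyy' : y' ≤ y)
    (hyt : y ≤ tseq w k) : 0 ≤ bumpPoissonIntegral w ρ k y - bumpPoissonIntegral w ρ k y' := by
  have := epsseq_nonneg hw_mem hρ k
  have := sub_nonneg.2 hyy'
  exact le_trans (by positivity) (bumpPoissonIntegral_sub_ge hw_mem hρ hy' hyy' hyt)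

lemma bumpPoissonIntegral_sub_ge_of_mem_Icc {n : ℕ} {r : ℝ} (ha : 1 / 2 ≤ w n)
    (hr : r ∈ Icc (w n) (w (n + 1))) :
    3 / 1600 * (ρ n / (1 - w n)) ≤
      bumpPoissonIntegral w ρ n (cayley (r * w n)) - bumpPoissonIntegral w ρ n (cayley (w n)) := by
  obtain ⟨ha0, ha1⟩ := hw_mem n
  have hb1 := (hw_mem (n + 1)).2
  have hr1 : r ≤ 1 := hr.2.trans hb1.le
  obtain ⟨hy₀yᵣ, hyᵣt⟩ := cayley_mul_mem_Icc ha0.le hr.1 hr1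
  have hgap : (1 - w (n + 1)) / 4 ≤ cayley (r * w n) - cayley (w n) :=
    (by linarith [hr.2] : (1 - w (n + 1)) / 4 ≤ (1 - r) / 4).trans
      (one_sub_div_four_le_cayley_mul_sub_cayley ha ha1.le (ha0.le.trans hr.1) hr1)
  have heps : epsseq w ρ n = (1 - w n) / (1 - w (n + 1)) * ρ n := rfl
  have := epsseq_nonneg hw_mem hρ n
  have := tseq_pos hw_mem n
  calc 3 / 1600 * (ρ n / (1 - w n))
      = 3 / 100 * epsseq w ρ n * ((1 - w (n + 1)) / 4) / (2 * (1 - w n)) ^ 2 := by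
        rw [heps]
        field_simp [(by linarith : 1 - w n ≠ 0), (by linarith : 1 - w (n + 1) ≠ 0)]
        ring
    _ ≤ 3 / 100 * epsseq w ρ n * (cayley (r * w n) - cayley (w n)) / tseq w n ^ 2 := by
        gcongr
        exact cayley_sq_le ha1.le
    _ ≤ _ := bumpPoissonIntegral_sub_ge hw_mem hρ (cayley_pos (by linarith) ha1) hy₀yᵣ hyᵣt

lemma summable_bumpPoissonIntegral (hsum : Summable (epsseq w ρ)) (hy : 0 < y) :
    Summable fun k => bumpPoissonIntegral w ρ (k + 1) y :=
  (((summable_nat_add_iff 1).2 hsum).div_const y).of_nonneg_of_le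
    (fun k => bumpPoissonIntegral_nonneg hw_mem hρ hy (k + 1))
    (fun k => bumpPoissonIntegral_le hw_mem hρ hy (k + 1))

lemma Ph_eq_tsum_bumpPoissonIntegral (hsum : Summable (epsseq w ρ)) (hy : 0 < y) :
    Ph w ρ y = (∑' k, bumpPoissonIntegral w ρ (k + 1) y) / Real.pi := by
  rw [Ph, one_div_mul_eq_div]
  congr 1
  refine integral_halfPlanePoissonKernel_mul_tsum_indicator hy
    (fun k => by linarith [tseq_pos hw_mem (k + 1)])
    (fun k => div_nonneg (epsseq_nonneg hw_mem hρ _) (tseq_pos hw_mem _).le) ?_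
  refine ((summable_nat_add_iff 1).2 hsum).congr fun k => ?_
  have := (tseq_pos hw_mem (k + 1)).ne'
  field_simp
  ring

lemma Ph_sub_Ph_eq_tsum (hsum : Summable (epsseq w ρ)) (hy : 0 < y) (hy' : 0 < y') :
    Ph w ρ y - Ph w ρ y' = (∑' k, (bumpPoissonIntegral w ρ (k + 1) y -
      bumpPoissonIntegral w ρ (k + 1) y')) / Real.pi := by
  rw [Ph_eq_tsum_bumpPoissonIntegral hw_mem hρ hsum hy,
    Ph_eq_tsum_bumpPoissonIntegral hw_mem hρ hsum hy', ← sub_div,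
    (summable_bumpPoissonIntegral hw_mem hρ hsum hy).tsum_sub
      (summable_bumpPoissonIntegral hw_mem hρ hsum hy')]

end Bumps

lemma Ph_sub_Ph_ge {w ρ : ℕ → ℝ} (hw_mono : Monotone w) (hw_mem : ∀ n, w n ∈ Ioo 0 1)
    (hρ : ∀ n, 0 ≤ ρ n) (hsum : Summable (epsseq w ρ)) {n : ℕ} (hn : 0 < n)
    (ha : 1 / 2 ≤ w n) (htail : ∑' k, epsseq w ρ (n + 1 + k) ≤ ρ n / 1600) {r : ℝ}
    (hr : r ∈ Icc (w n) (w (n + 1))) :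
    1 / (1600 * Real.pi) * (ρ n / (1 - w n)) ≤
      Ph w ρ (cayley (r * w n)) - Ph w ρ (cayley (w n)) := by
  obtain ⟨m, rfl⟩ : ∃ m, n = m + 1 := ⟨n - 1, by omega⟩
  obtain ⟨ha0, ha1⟩ := hw_mem (m + 1)
  have hy₀ : 0 < cayley (w (m + 1)) := cayley_pos (by linarith) ha1
  obtain ⟨hy₀yᵣ, hyᵣt⟩ := cayley_mul_mem_Icc ha0.le hr.1 (hr.2.trans (hw_mem _).2.le)
  have hyᵣ := hy₀.trans_le hy₀yᵣ
  set D := fun k => bumpPoissonIntegral w ρ (k + 1) (cayley (r * w (m + 1))) -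
    bumpPoissonIntegral w ρ (k + 1) (cayley (w (m + 1)))
  have hsum_tail : Summable fun k => epsseq w ρ (k + (m + 1) + 1) / cayley (w (m + 1)) :=
    ((summable_nat_add_iff (m + 1 + 1)).2 hsum).div_const _
  have hD := sub_tsum_le_tsum_of_head_nonneg
    ((summable_bumpPoissonIntegral hw_mem hρ hsum hyᵣ).sub
      (summable_bumpPoissonIntegral hw_mem hρ hsum hy₀)) hsum_tail
    (fun k hk => bumpPoissonIntegral_sub_nonneg hw_mem hρ hy₀ hy₀yᵣ
      (hyᵣt.trans (tseq_antitone hw_mono hw_mem (by omega))))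
    (bumpPoissonIntegral_sub_ge_of_mem_Icc hw_mem hρ ha hr)
    (fun k => neg_div_le_bumpPoissonIntegral_sub hw_mem hρ hyᵣ hy₀ _)
  have htail' : ∑' k, epsseq w ρ (k + (m + 1) + 1) / cayley (w (m + 1)) ≤
      2 / 1600 * (ρ (m + 1) / (1 - w (m + 1))) := by
    have := hρ (m + 1)
    rw [tsum_div_const]
    calc (∑' k, epsseq w ρ (k + (m + 1) + 1)) / cayley (w (m + 1))
        ≤ ρ (m + 1) / 1600 / ((1 - w (m + 1)) / 2) :=
          div_le_div₀ (by positivity) ((tsum_congr fun k => by ring_nf).trans_le htail)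
            (by linarith) (one_sub_div_two_le_cayley (by linarith) ha1.le)
      _ = 2 / 1600 * (ρ (m + 1) / (1 - w (m + 1))) := by rw [div_div_eq_mul_div]; ring
  rw [Ph_sub_Ph_eq_tsum hw_mem hρ hsum hyᵣ hy₀]
  calc 1 / (1600 * Real.pi) * (ρ (m + 1) / (1 - w (m + 1)))
      = ρ (m + 1) / (1 - w (m + 1)) / 1600 / Real.pi := by ring
    _ ≤ (∑' k, D k) / Real.pi := by gcongr; linarith

/-- The analytic core of Lemma 3.3: under the hypotheses of the lemma there are
`C > 0` and `N` such that for all `n ≥ N` and all `r ∈ [wₙ, wₙ₊₁]`,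
`P_h((1-rwₙ)/(1+rwₙ)) - P_h((1-wₙ)/(1+wₙ)) ≥ C ρₙ/(1-wₙ)`. -/
theorem poisson_integral_radial_growth
    (w ρ : ℕ → ℝ) (hw_mono : StrictMono w) (hw_mem : ∀ n, w n ∈ Set.Ioo (0 : ℝ) 1)
    (hw_lim : Tendsto w atTop (nhds 1))
    (hρ : ∀ n, 0 < ρ n)
    (hsum : Summable (fun k : ℕ => epsseq w ρ k))
    (hlittleo : Tendsto (fun n : ℕ => (∑' k : ℕ, epsseq w ρ (n + 1 + k)) / ρ n)
      atTop (nhds 0)) :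
    ∃ C > (0 : ℝ), ∃ N : ℕ, ∀ n ≥ N, ∀ r ∈ Set.Icc (w n) (w (n + 1)),
      C * (ρ n / (1 - w n)) ≤
        Ph w ρ ((1 - r * w n) / (1 + r * w n)) - Ph w ρ ((1 - w n) / (1 + w n)) := by
  obtain ⟨N, hN⟩ := eventually_atTop.1 <|
    (hlittleo.eventually (eventually_le_nhds (by norm_num : (0 : ℝ) < 1 / 1600))).and <|
      (hw_lim.eventually (eventually_ge_nhds (by norm_num : (1 : ℝ) / 2 < 1))).and
        (eventually_gt_atTop 0)
  refine ⟨1 / (1600 * Real.pi), by positivity, N, fun n hn r hr => ?_⟩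
  obtain ⟨htail, ha, hn⟩ := hN n hn
  rw [div_le_iff₀ (hρ n), one_div_mul_eq_div] at htail
  exact Ph_sub_Ph_ge hw_mono.monotone hw_mem (fun n => (hρ n).le) hsum hn ha htail hr
end
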